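/- Let 𝒳 ⊆ ℝ^d be a nonempty closed convex set of diameter at most D > 0, and let G > 0. For t = 1, …, T, let S_t be nonempty closed convex subsets with 𝒳 = S_0 ⊇ S_1 ⊇ ⋯ ⊇ S_T, let f_t : ℝ^d → ℝ, and let h_t ∈ ℝ^d satisfy ‖h_t‖ ≤ G and f_t(y) ≥ f_t(x_t) + ⟨h_t, y − x_t⟩ for all y ∈ 𝒳. Run Nested Projected OGD with step sizes η_t = D/(G√t): x_1 ∈ 𝒳 and x_{t+1} = Π_{S_t}(x_t − η_t h_t). Then for every x* ∈ S_T: Σ_{t=1}^{T} (f_t(x_t) − f_t(x*)) ≤ (3/2) · G · D · √T. -/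

import Mathlib

/-!
Each round, convexity gives `f_t(x_t) - f_t(x*) ≤ ⟪h_t, x_t - x*⟫`, and since `x*` lies in the
set `S_t` onto which the step is projected, projection is nonexpansive towards `x*`; expanding
`‖x_t - η_t h_t - x*‖²` bounds the inner product by
`(‖x_t - x*‖² - ‖x_{t+1} - x*‖²) / (2η_t) + η_t G² / 2`.
Because the weights `1 / (2η_t) = G√t / (2D)` increase, Abel summation bounds the telescoping
part by `D² / (2η_T) = GD√T / 2`, and `∑ η_t G² / 2 = (GD/2) ∑ 1/√t ≤ GD√T`.
-/

open scoped RealInnerProductSpace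

open Finset

theorem sum_Icc_one_div_sqrt_le (n : ℕ) :
    ∑ t ∈ Icc 1 n, 1 / √(t : ℝ) ≤ 2 * √(n : ℝ) := by
  induction n with
  | zero => simp
  | succ n ih =>
    rw [sum_Icc_succ_top (by omega)]
    have hpos : 0 < √((n + 1 : ℕ) : ℝ) := Real.sqrt_pos.2 (by positivity)
    have hsq : √((n + 1 : ℕ) : ℝ) ^ 2 = n + 1 := by
      rw [Real.sq_sqrt (by positivity)]; push_cast; ring
    have hstep :
        1 / √((n + 1 : ℕ) : ℝ) ≤ 2 * (√((n + 1 : ℕ) : ℝ) - √(n : ℝ)) := by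
      rw [div_le_iff₀ hpos]
      nlinarith [sq_nonneg (√((n + 1 : ℕ) : ℝ) - √(n : ℝ)),
        Real.sq_sqrt (Nat.cast_nonneg (α := ℝ) n)]
    linarith

theorem sum_Icc_sub_mul_le_of_monotone (a b : ℕ → ℝ) (M : ℝ) (n : ℕ) (hb : Monotone b)
    (hb0 : b 0 = 0) (ha : ∀ t ∈ Icc 1 n, a t ≤ M) :
    ∑ t ∈ Icc 1 n, (a t - a (t + 1)) * b t ≤ (M - a (n + 1)) * b n := by
  induction n with
  | zero => simp [hb0]
  | succ m ih =>
    rw [sum_Icc_succ_top (by omega)]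
    have hsum := ih fun t ht => ha t (by simp only [mem_Icc] at ht ⊢; omega)
    have hbm : b m ≤ b (m + 1) := hb m.le_succ
    have ham : a (m + 1) ≤ M := ha (m + 1) (by simp)
    nlinarith

theorem Set.subset_of_le_of_succ_subset {α : Type*} {S : ℕ → Set α} {T : ℕ}
    (hS : ∀ t < T, S (t + 1) ⊆ S t) {s t : ℕ} (hst : s ≤ t) (htT : t ≤ T) :
    S t ⊆ S s := by
  induction hst with
  | refl => exact subset_rfl
  | step _ ih => exact (hS _ (by omega)).trans (ih (by omega))

section ProjectedStep

variable {E : Type*} [NormedAddCommGroup E] [InnerProductSpace ℝ E]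

theorem norm_sub_sq_le_of_inner_sub_nonpos {z p w : E} (hp : ⟪z - p, w - p⟫ ≤ 0) :
    ‖p - w‖ ^ 2 ≤ ‖z - w‖ ^ 2 := by
  have hexpand : ‖z - w‖ ^ 2 = ‖z - p‖ ^ 2 - 2 * ⟪z - p, w - p⟫ + ‖p - w‖ ^ 2 := by
    rw [← sub_add_sub_cancel z p w, norm_add_sq_real, ← neg_sub w p, inner_neg_right]
    ring
  nlinarith [sq_nonneg ‖z - p‖]

theorem inner_le_of_projected_step {x g p w : E} {η G : ℝ} (hη : 0 < η) (hg : ‖g‖ ≤ G)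
    (hp : ⟪(x - η • g) - p, w - p⟫ ≤ 0) :
    ⟪g, x - w⟫ ≤ (‖x - w‖ ^ 2 - ‖p - w‖ ^ 2) / (2 * η) + η / 2 * G ^ 2 := by
  have hproj := norm_sub_sq_le_of_inner_sub_nonpos hp
  have hexpand : ‖(x - η • g) - w‖ ^ 2 =
      ‖x - w‖ ^ 2 - 2 * η * ⟪g, x - w⟫ + η ^ 2 * ‖g‖ ^ 2 := by
    rw [sub_right_comm, norm_sub_sq_real, real_inner_smul_right, norm_smul, real_inner_comm,
      mul_pow, Real.norm_eq_abs, sq_abs]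
    ring
  have hgG : ‖g‖ ^ 2 ≤ G ^ 2 := pow_le_pow_left₀ (norm_nonneg g) hg 2
  rw [div_add' _ _ _ (by positivity), le_div_iff₀ (by positivity)]
  nlinarith

end ProjectedStep

theorem sum_le_of_step_size_inv_sqrt (T : ℕ) {D G : ℝ} (hD : 0 < D) (hG : 0 < G)
    (a r : ℕ → ℝ) (haD : ∀ t ∈ Icc 1 T, a t ≤ D ^ 2) (haT : 0 ≤ a (T + 1))
    (hr : ∀ t ∈ Icc 1 T,
      r t ≤ (a t - a (t + 1)) / (2 * (D / (G * √(t : ℝ)))) +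
        D / (G * √(t : ℝ)) / 2 * G ^ 2) :
    ∑ t ∈ Icc 1 T, r t ≤ 3 / 2 * G * D * √(T : ℝ) := by
  have hterm : ∀ t ∈ Icc 1 T, r t ≤
      (a t - a (t + 1)) * (G * √(t : ℝ) / D) / 2 + G * D / 2 * (1 / √(t : ℝ)) := by
    intro t ht
    have hst : 0 < √(t : ℝ) := Real.sqrt_pos.2 (by have := (mem_Icc.1 ht).1; positivity)
    convert hr t ht using 2 <;> field_simp
  have hb : Monotone fun t : ℕ => G * √(t : ℝ) / D := fun s t hst => by
    dsimp only
    gcongr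
  have habel := sum_Icc_sub_mul_le_of_monotone a _ (D ^ 2) T hb (by simp) haD
  have hinv := sum_Icc_one_div_sqrt_le T
  have hbT : 0 ≤ G * √(T : ℝ) / D := by positivity
  calc ∑ t ∈ Icc 1 T, r t
      ≤ (∑ t ∈ Icc 1 T, (a t - a (t + 1)) * (G * √(t : ℝ) / D)) / 2
          + G * D / 2 * ∑ t ∈ Icc 1 T, 1 / √(t : ℝ) := by
        rw [sum_div, mul_sum, ← sum_add_distrib]
        exact sum_le_sum hterm
    _ ≤ (D ^ 2 - a (T + 1)) * (G * √(T : ℝ) / D) / 2 + G * D / 2 * (2 * √(T : ℝ)) := by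
        gcongr
    _ ≤ 3 / 2 * G * D * √(T : ℝ) := by
        have : D ^ 2 * (G * √(T : ℝ) / D) = G * D * √(T : ℝ) := by field_simp
        nlinarith [mul_nonneg haT hbT]

theorem np_ogd_regret_convex_general (d T : ℕ) (D G : ℝ) (hD : 0 < D) (hG : 0 < G)
    (X : Set (EuclideanSpace ℝ (Fin d)))
    (hXdiam : ∀ u ∈ X, ∀ v ∈ X, ‖u - v‖ ≤ D)
    (S : ℕ → Set (EuclideanSpace ℝ (Fin d)))
    (hS0 : S 0 = X)
    (hSnest : ∀ t, t < T → S (t + 1) ⊆ S t)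
    (f : ℕ → EuclideanSpace ℝ (Fin d) → ℝ)
    (h x : ℕ → EuclideanSpace ℝ (Fin d))
    (hh : ∀ t, 1 ≤ t → t ≤ T → ‖h t‖ ≤ G)
    (hsub : ∀ t, 1 ≤ t → t ≤ T → ∀ y ∈ X,
      f t y ≥ f t (x t) + ⟪h t, y - x t⟫)
    (hx1 : x 1 ∈ X)
    (hproj : ∀ t, 1 ≤ t → t ≤ T → x (t + 1) ∈ S t ∧
      ∀ y ∈ S t, ⟪(x t - (D / (G * Real.sqrt t)) • h t) - x (t + 1),
        y - x (t + 1)⟫ ≤ 0)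
    (xstar : EuclideanSpace ℝ (Fin d)) (hxstar : xstar ∈ S T) :
    ∑ t ∈ Finset.Icc 1 T, (f t (x t) - f t xstar) ≤
      3 / 2 * G * D * Real.sqrt T := by
  have hSX : ∀ t ≤ T, S t ⊆ X := fun t ht =>
    hS0 ▸ Set.subset_of_le_of_succ_subset hSnest t.zero_le ht
  have hxstarS : ∀ t ≤ T, xstar ∈ S t := fun t ht =>
    Set.subset_of_le_of_succ_subset hSnest ht le_rfl hxstar
  have hxstarX : xstar ∈ X := hSX T le_rfl hxstar
  have hxX : ∀ t ∈ Icc 1 T, x t ∈ X := by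
    rintro (_ | _ | t) ht <;> simp only [mem_Icc] at ht
    · omega
    · exact hx1
    · exact hSX (t + 1) (by omega) (hproj (t + 1) (by omega) (by omega)).1
  refine sum_le_of_step_size_inv_sqrt T hD hG (fun t => ‖x t - xstar‖ ^ 2) _
    (fun t ht => pow_le_pow_left₀ (norm_nonneg _) (hXdiam _ (hxX t ht) _ hxstarX) 2)
    (sq_nonneg _) fun t ht => ?_
  obtain ⟨ht1, htT⟩ := mem_Icc.1 ht
  have hconvex : f t (x t) - f t xstar ≤ ⟪h t, x t - xstar⟫ := by
    have := hsub t ht1 htT xstar hxstarX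
    rw [← neg_sub (x t), inner_neg_right] at this
    linarith
  exact hconvex.trans <| inner_le_of_projected_step
    (div_pos hD (mul_pos hG (Real.sqrt_pos.2 (by positivity)))) (hh t ht1 htT)
    ((hproj t ht1 htT).2 xstar (hxstarS t htT))

/-- Regret bound for Nested Projected OGD with step sizes `η_t = D/(G√t)`
for convex losses: the regret is at most `(3/2) G D √T`. -/
theorem np_ogd_regret_convex (d T : ℕ) (D G : ℝ) (hD : 0 < D) (hG : 0 < G)
    (X : Set (EuclideanSpace ℝ (Fin d)))
    (hXne : X.Nonempty) (hXcl : IsClosed X) (hXcv : Convex ℝ X)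
    (hXdiam : ∀ u ∈ X, ∀ v ∈ X, ‖u - v‖ ≤ D)
    (S : ℕ → Set (EuclideanSpace ℝ (Fin d)))
    (hS0 : S 0 = X)
    (hSne : ∀ t, t ≤ T → (S t).Nonempty)
    (hScl : ∀ t, t ≤ T → IsClosed (S t))
    (hScv : ∀ t, t ≤ T → Convex ℝ (S t))
    (hSnest : ∀ t, t < T → S (t + 1) ⊆ S t)
    (f : ℕ → EuclideanSpace ℝ (Fin d) → ℝ)
    (h x : ℕ → EuclideanSpace ℝ (Fin d))
    (hh : ∀ t, 1 ≤ t → t ≤ T → ‖h t‖ ≤ G)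
    (hsub : ∀ t, 1 ≤ t → t ≤ T → ∀ y ∈ X,
      f t y ≥ f t (x t) + ⟪h t, y - x t⟫)
    (hx1 : x 1 ∈ X)
    (hproj : ∀ t, 1 ≤ t → t ≤ T → x (t + 1) ∈ S t ∧
      ∀ y ∈ S t, ⟪(x t - (D / (G * Real.sqrt t)) • h t) - x (t + 1),
        y - x (t + 1)⟫ ≤ 0)
    (xstar : EuclideanSpace ℝ (Fin d)) (hxstar : xstar ∈ S T) :
    ∑ t ∈ Finset.Icc 1 T, (f t (x t) - f t xstar) ≤
      3 / 2 * G * D * Real.sqrt T :=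
  np_ogd_regret_convex_general d T D G hD hG X hXdiam S hS0 hSnest f h x hh hsub hx1 hproj xstar
    hxstar
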